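/- Let R be a commutative ring with a fixed permutable weak regular sequence s_1,...,s_k, and let f, f_1, ..., f_m be monomials in s_1,...,s_k. If a·f = a_1·f_1 + ... + a_m·f_m for some a, a_1,...,a_m ∈ R, then a lies in the ideal generated by g_1,...,g_m, where g_i = f_i / gcd(f_i, f) (equivalently lcm(f_i,f)/f), the gcd and lcm being computed via componentwise min and max of exponent vectors. -/

import Mathlib

/-- The `s`-monomial with exponent vector `α`: `∏ j, s j ^ α j`. -/
def sMon {R : Type*} [CommRing R] {k : ℕ} (s : Fin k → R) (α : Fin k → ℕ) : R :=
  ∏ j, s j ^ α j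

/-- `s` is a weak regular sequence: each `s i` is a nonzerodivisor modulo the ideal
generated by the preceding terms. -/
def IsWeakRegSeq {R : Type*} [CommRing R] {k : ℕ} (s : Fin k → R) : Prop :=
  ∀ i : Fin k, ∀ t : R,
    t * s i ∈ Ideal.span (s '' {j | j < i}) → t ∈ Ideal.span (s '' {j | j < i})

/-- `s` is a permutable weak regular sequence: every permutation of it is a weak
regular sequence. -/
def IsPermWeakRegSeq {R : Type*} [CommRing R] {k : ℕ} (s : Fin k → R) : Prop :=
  ∀ σ : Equiv.Perm (Fin k), IsWeakRegSeq (s ∘ σ)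

/-!
Colon ideals by monomials are computed one variable at a time, as
`I : s^(α + e_j) = (I : s^α) : s_j`. Modulo `s_j`, the generators divisible by `s_j` simply lose
that factor, so everything reduces to: `s_j` is a nonzerodivisor modulo any ideal `I` generated
by `s`-monomials not involving `s_j`. This is proved by induction on the total degree of the
generators. If each generator is `1` or a single `s_l`, it is the weak regularity of a suitable
permutation of `s`. Otherwise some generator `s^β₀ ≠ s_l₀` is divisible by `s_l₀`. From
`a s_j ∈ I ⊆ I + (s_l₀)`, an ideal of smaller degree, we get `a = d s_l₀ + q` with `q` in the part
of `I` free of `s_l₀`. Then `d s_j ∈ I : s_l₀`, which is generated by the `s^(β - e_l₀)`: these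
still avoid `s_j` and have smaller total degree, so `d ∈ I : s_l₀` and `a ∈ I`.
-/

open Finset

lemma Fin.exists_perm_apply_eq_and_image_Iio_eq {k : ℕ} {T : Finset (Fin k)} {j : Fin k}
    (hj : j ∉ T) :
    ∃ (σ : Equiv.Perm (Fin k)) (i : Fin k), σ i = j ∧ σ '' {p | p < i} = T := by
  have hcard : #T + 1 ≤ k := by
    simpa [card_insert_of_notMem hj] using card_le_univ (insert j T)
  let x := (T.orderEmbOfFin rfl).toEmbedding
  have hx : j ∉ Set.range x := by simpa [x] using hj
  obtain ⟨σ, hσ⟩ := Equiv.Perm.exists_extending_pair (Fin.castLE hcard)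
    (Fin.Embedding.snoc x hx) (Fin.castLE_injective hcard) (Fin.Embedding.snoc x hx).injective
  refine ⟨σ, Fin.castLE hcard (Fin.last _), by rw [hσ, Fin.Embedding.snoc_last], ?_⟩
  have hIio : {p | p < Fin.castLE hcard (Fin.last _)} =
      Set.range (fun i : Fin #T => Fin.castLE hcard i.castSucc) := by
    ext p
    refine ⟨fun hp => ⟨⟨p, hp⟩, rfl⟩, ?_⟩
    rintro ⟨i, rfl⟩
    exact i.castSucc_lt_last
  calc σ '' _ = Set.range (fun i : Fin #T => σ (Fin.castLE hcard i.castSucc)) := by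
        rw [hIio, ← Set.range_comp]; rfl
    _ = Set.range x := by simp_rw [hσ, Fin.Embedding.snoc_castSucc]
    _ = T := T.range_orderEmbOfFin rfl

section

variable {R : Type*} [CommRing R] {k : ℕ}

lemma IsPermWeakRegSeq.mem_span_image_of_mul_mem {s : Fin k → R} (hs : IsPermWeakRegSeq s)
    {T : Finset (Fin k)} {j : Fin k} (hj : j ∉ T) {t : R}
    (ht : t * s j ∈ Ideal.span (s '' T)) : t ∈ Ideal.span (s '' T) := by
  obtain ⟨σ, i, hσi, hσT⟩ := Fin.exists_perm_apply_eq_and_image_Iio_eq hj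
  have hreg := hs σ i t
  rw [Function.comp_apply, hσi, Set.image_comp, hσT] at hreg
  exact hreg ht

section sMon

variable (s : Fin k → R)

lemma sMon_add (α γ : Fin k → ℕ) : sMon s (α + γ) = sMon s α * sMon s γ := by
  simp [sMon, pow_add, prod_mul_distrib]

lemma sMon_zero : sMon s 0 = 1 := by simp [sMon]

lemma sMon_single (j : Fin k) : sMon s (Pi.single j 1) = s j := by
  rw [sMon, prod_eq_single j (fun l _ hl => by simp [hl]) (by simp)]
  simp

lemma sMon_dvd_sMon {α γ : Fin k → ℕ} (h : α ≤ γ) : sMon s α ∣ sMon s γ :=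
  ⟨sMon s (γ - α), by rw [← sMon_add, add_tsub_cancel_of_le h]⟩

end sMon

lemma Pi.single_one_le_of_ne_zero {ι : Type*} [DecidableEq ι] {β : ι → ℕ} {j : ι}
    (h : β j ≠ 0) : Pi.single j 1 ≤ β := by
  intro l
  rcases eq_or_ne l j with rfl | hl
  · simpa [Nat.one_le_iff_ne_zero] using h
  · simp [hl]

def monomialIdeal (s : Fin k → R) (B : Finset (Fin k → ℕ)) : Ideal R :=
  Ideal.span (sMon s '' B)

def degreeSum (B : Finset (Fin k → ℕ)) : ℕ :=
  ∑ β ∈ B, ∑ l, β l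

section monomialIdeal

variable (s : Fin k → R)

lemma sMon_mem_monomialIdeal {B : Finset (Fin k → ℕ)} {β : Fin k → ℕ} (hβ : β ∈ B) :
    sMon s β ∈ monomialIdeal s B :=
  Ideal.subset_span ⟨β, hβ, rfl⟩

lemma monomialIdeal_le_of_forall_exists_le {B C : Finset (Fin k → ℕ)}
    (h : ∀ γ ∈ C, ∃ β ∈ B, β ≤ γ) : monomialIdeal s C ≤ monomialIdeal s B := by
  refine Ideal.span_le.mpr ?_
  rintro _ ⟨γ, hγ, rfl⟩
  obtain ⟨β, hβ, hle⟩ := h γ hγ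
  exact Ideal.mem_of_dvd _ (sMon_dvd_sMon s hle) (sMon_mem_monomialIdeal s hβ)

lemma monomialIdeal_mono {B C : Finset (Fin k → ℕ)} (h : B ⊆ C) :
    monomialIdeal s B ≤ monomialIdeal s C :=
  monomialIdeal_le_of_forall_exists_le s fun γ hγ => ⟨γ, h hγ, le_rfl⟩

lemma monomialIdeal_insert (β : Fin k → ℕ) (B : Finset (Fin k → ℕ)) :
    monomialIdeal s (insert β B) = Ideal.span {sMon s β} ⊔ monomialIdeal s B := by
  rw [monomialIdeal, coe_insert, Set.image_insert_eq, Ideal.span_insert, monomialIdeal]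

lemma mul_sMon_mem_monomialIdeal {B : Finset (Fin k → ℕ)} {δ : Fin k → ℕ} {d : R}
    (hd : d ∈ monomialIdeal s (B.image (· - δ))) : d * sMon s δ ∈ monomialIdeal s B := by
  suffices monomialIdeal s (B.image (· - δ)) ≤ (monomialIdeal s B).colon {sMon s δ} by
    simpa using this hd
  refine Ideal.span_le.mpr ?_
  rintro _ ⟨_, hγ, rfl⟩
  obtain ⟨β, hβ, rfl⟩ := mem_image.mp hγ
  rw [SetLike.mem_coe, Submodule.mem_colon_singleton, smul_eq_mul, ← sMon_add]
  exact Ideal.mem_of_dvd _ (sMon_dvd_sMon s le_tsub_add) (sMon_mem_monomialIdeal s hβ)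

lemma mem_monomialIdeal_image_tsub_single {B : Finset (Fin k → ℕ)} {j : Fin k}
    (hreg : ∀ t, t * s j ∈ monomialIdeal s (B.filter (· j = 0)) →
      t ∈ monomialIdeal s (B.filter (· j = 0)))
    {a : R} (ha : a * s j ∈ monomialIdeal s B) :
    a ∈ monomialIdeal s (B.image (· - Pi.single j 1)) := by
  set P := B.filter (· j = 0)
  set B' := B.image (· - Pi.single j 1)
  have hPB' : monomialIdeal s P ≤ monomialIdeal s B' :=
    monomialIdeal_le_of_forall_exists_le s fun β hβ =>
      ⟨β - Pi.single j 1, mem_image_of_mem _ (mem_filter.mp hβ).1, tsub_le_self⟩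
  have hsplit :
      monomialIdeal s B ≤ monomialIdeal s P ⊔ Ideal.span {s j} * monomialIdeal s B' := by
    refine Ideal.span_le.mpr ?_
    rintro _ ⟨β, hβ, rfl⟩
    by_cases hβj : β j = 0
    · exact Ideal.mem_sup_left (sMon_mem_monomialIdeal s (mem_filter.mpr ⟨hβ, hβj⟩))
    · refine Ideal.mem_sup_right ?_
      rw [← add_tsub_cancel_of_le (Pi.single_one_le_of_ne_zero hβj), sMon_add, sMon_single]
      exact Ideal.mul_mem_mul (Ideal.mem_span_singleton_self _)
        (sMon_mem_monomialIdeal s (mem_image_of_mem _ hβ))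
  obtain ⟨p, hp, y, hy, hpy⟩ := Submodule.mem_sup.mp (hsplit ha)
  obtain ⟨w, hw, rfl⟩ := Ideal.mem_span_singleton_mul.mp hy
  have hdiff : (a - w) * s j ∈ monomialIdeal s P := by
    rwa [show (a - w) * s j = p by linear_combination -hpy]
  simpa using add_mem (hPB' (hreg _ hdiff)) hw

end monomialIdeal

lemma degreeSum_insert {B : Finset (Fin k → ℕ)} {β : Fin k → ℕ} (hβ : β ∉ B) :
    degreeSum (insert β B) = ∑ l, β l + degreeSum B :=
  sum_insert hβ

lemma sum_add_degreeSum_filter_le {B : Finset (Fin k → ℕ)} {β : Fin k → ℕ} (hβ : β ∈ B)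
    (p : (Fin k → ℕ) → Prop) [DecidablePred p] (hpβ : ¬ p β) :
    ∑ l, β l + degreeSum (B.filter p) ≤ degreeSum B := by
  rw [← degreeSum_insert (by simp [hpβ])]
  exact sum_le_sum_of_subset (insert_subset hβ (filter_subset p B))

lemma degreeSum_image_tsub_single_lt {B : Finset (Fin k → ℕ)} {β : Fin k → ℕ} (hβ : β ∈ B)
    {l : Fin k} (hl : β l ≠ 0) : degreeSum (B.image (· - Pi.single l 1)) < degreeSum B :=
  calc degreeSum (B.image (· - Pi.single l 1))
      ≤ ∑ γ ∈ B, ∑ i, (γ - Pi.single l 1 : Fin k → ℕ) i :=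
        sum_image_le_of_nonneg fun _ _ => Nat.zero_le _
    _ < degreeSum B :=
      sum_lt_sum (fun _ _ => sum_le_sum fun _ _ => tsub_le_self)
        ⟨β, hβ, sum_lt_sum (fun _ _ => tsub_le_self) ⟨l, mem_univ l, by simp; omega⟩⟩

namespace IsPermWeakRegSeq

variable {s : Fin k → R}

lemma mem_monomialIdeal_of_mul_mem_of_linear (hs : IsPermWeakRegSeq s)
    {B : Finset (Fin k → ℕ)} {j : Fin k} (hlin : ∀ β ∈ B, ∀ l, β l ≠ 0 → β = Pi.single l 1)
    (hBj : ∀ β ∈ B, β j = 0) {a : R} (ha : a * s j ∈ monomialIdeal s B) :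
    a ∈ monomialIdeal s B := by
  by_cases h0 : 0 ∈ B
  · have hone : (1 : R) ∈ monomialIdeal s B := sMon_zero s ▸ sMon_mem_monomialIdeal s h0
    rw [(Ideal.eq_top_iff_one _).mpr hone]
    exact Submodule.mem_top
  set T := univ.filter fun l => Pi.single l 1 ∈ B
  have hBT : monomialIdeal s B = Ideal.span (s '' T) := by
    rw [monomialIdeal]
    congr 1
    ext x
    constructor
    · rintro ⟨β, hβ, rfl⟩
      obtain ⟨l, hl⟩ : ∃ l, β l ≠ 0 := by
        by_contra! h
        rw [show β = 0 from funext h] at hβ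
        exact h0 hβ
      obtain rfl := hlin β hβ l hl
      exact ⟨l, by simpa [T] using hβ, (sMon_single s l).symm⟩
    · rintro ⟨l, hl, rfl⟩
      exact ⟨Pi.single l 1, (mem_filter.mp hl).2, sMon_single s l⟩
  have hjT : j ∉ T := fun hj => by simpa using hBj _ (mem_filter.mp hj).2
  rw [hBT] at ha ⊢
  exact hs.mem_span_image_of_mul_mem hjT ha

theorem mem_monomialIdeal_of_mul_mem (hs : IsPermWeakRegSeq s) {B : Finset (Fin k → ℕ)}
    {j : Fin k} (hBj : ∀ β ∈ B, β j = 0) {a : R} (ha : a * s j ∈ monomialIdeal s B) :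
    a ∈ monomialIdeal s B := by
  induction hN : degreeSum B using Nat.strong_induction_on generalizing B j a with
  | _ N IH =>
  by_cases hlin : ∀ β ∈ B, ∀ l, β l ≠ 0 → β = Pi.single l 1
  · exact hs.mem_monomialIdeal_of_mul_mem_of_linear hlin hBj ha
  push Not at hlin
  obtain ⟨β₀, hβ₀, l₀, hl₀, hne⟩ := hlin
  have hl₀j : l₀ ≠ j := by
    rintro rfl
    exact hl₀ (hBj β₀ hβ₀)
  set e := (Pi.single l₀ 1 : Fin k → ℕ)
  set Q := B.filter (· l₀ = 0)
  have he : e ≤ β₀ := Pi.single_one_le_of_ne_zero hl₀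
  have hβ₀deg : 1 < ∑ l, β₀ l := by
    obtain ⟨i, hi⟩ := (Pi.lt_def.mp (lt_of_le_of_ne he hne.symm)).2
    simpa [e] using sum_lt_sum (fun i _ => he i) ⟨i, mem_univ i, hi⟩
  have hQdeg : ∑ l, β₀ l + degreeSum Q ≤ N := hN ▸ sum_add_degreeSum_filter_le hβ₀ _ hl₀
  have heQ : e ∉ Q := by simp [Q, e]
  have ha' : a ∈ monomialIdeal s (insert e Q) := by
    refine IH _ (by rw [degreeSum_insert heQ]; simp [e]; omega) (j := j) ?_ ?_ rfl
    · simp only [mem_insert, mem_filter, forall_eq_or_imp, Q, e]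
      exact ⟨Pi.single_eq_of_ne hl₀j.symm 1, fun β hβ => hBj β hβ.1⟩
    · refine monomialIdeal_le_of_forall_exists_le s (fun β hβ => ?_) ha
      by_cases hβl₀ : β l₀ = 0
      · exact ⟨β, mem_insert_of_mem (mem_filter.mpr ⟨hβ, hβl₀⟩), le_rfl⟩
      · exact ⟨e, mem_insert_self e Q, Pi.single_one_le_of_ne_zero hβl₀⟩
  rw [monomialIdeal_insert, sMon_single] at ha'
  obtain ⟨d, q, hq, rfl⟩ := Ideal.mem_span_singleton_sup.mp ha'
  have hqB : q ∈ monomialIdeal s B := monomialIdeal_mono s (filter_subset _ B) hq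
  have hd : d * s j ∈ monomialIdeal s (B.image (· - e)) := by
    refine mem_monomialIdeal_image_tsub_single s
      (fun t ht => IH (degreeSum Q) (by omega) (fun β hβ => (mem_filter.mp hβ).2) ht rfl) ?_
    rw [show d * s j * s l₀ = (d * s l₀ + q) * s j - q * s j by ring]
    exact sub_mem ha (Ideal.mul_mem_right _ _ hqB)
  have hd' : d ∈ monomialIdeal s (B.image (· - e)) := by
    refine IH _ (hN ▸ degreeSum_image_tsub_single_lt hβ₀ hl₀) ?_ hd rfl
    simp only [mem_image]
    rintro _ ⟨β, hβ, rfl⟩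
    simp [hBj β hβ, e, Pi.single_eq_of_ne hl₀j.symm]
  exact add_mem (by simpa [e, sMon_single] using mul_sMon_mem_monomialIdeal s hd') hqB

theorem mem_monomialIdeal_image_tsub (hs : IsPermWeakRegSeq s) {B : Finset (Fin k → ℕ)}
    {α : Fin k → ℕ} {a : R} (ha : a * sMon s α ∈ monomialIdeal s B) :
    a ∈ monomialIdeal s (B.image (· - α)) := by
  induction hN : ∑ l, α l generalizing α a with
  | zero =>
    obtain rfl : α = 0 := funext fun l => (sum_eq_zero_iff.mp hN) l (mem_univ l)
    simpa [sMon_zero] using ha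
  | succ n IH =>
    obtain ⟨j, hj⟩ : ∃ j, α j ≠ 0 := by
      by_contra! h
      simp [h] at hN
    obtain ⟨α', rfl⟩ : ∃ α', α = α' + Pi.single j 1 :=
      ⟨α - Pi.single j 1, (tsub_add_cancel_of_le (Pi.single_one_le_of_ne_zero hj)).symm⟩
    rw [sMon_add, sMon_single, mul_comm (sMon s _), ← mul_assoc] at ha
    have h1 := IH ha (by simpa [sum_add_distrib] using hN)
    have h2 := mem_monomialIdeal_image_tsub_single s
      (fun t ht => hs.mem_monomialIdeal_of_mul_mem (fun β hβ => (mem_filter.mp hβ).2) ht) h1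
    simpa only [image_image, Function.comp_def, tsub_tsub] using h2

end IsPermWeakRegSeq

end

/-- If `a·f = a₁·f₁ + … + a_m·f_m` for `s`-monomials `f = s^α`, `f_i = s^{β i}`, then `a` lies
in the ideal generated by the `g_i = f_i / gcd(f_i, f) = s^{β i - min (β i) α}`. -/
theorem stmt1 {R : Type*} [CommRing R] {k m : ℕ} (s : Fin k → R)
    (hs : IsPermWeakRegSeq s) (α : Fin k → ℕ) (β : Fin m → Fin k → ℕ)
    (a : R) (c : Fin m → R)
    (h : a * sMon s α = ∑ i, c i * sMon s (β i)) :
    a ∈ Ideal.span (Set.range fun i => sMon s fun j => β i j - min (β i j) (α j)) := by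
  have hmem : a * sMon s α ∈ monomialIdeal s (univ.image β) :=
    h ▸ sum_mem fun i _ =>
      Ideal.mul_mem_left _ _ (sMon_mem_monomialIdeal s (mem_image_of_mem β (mem_univ i)))
  have hgen : Set.range (fun i => sMon s fun j => β i j - min (β i j) (α j)) =
      sMon s '' ((univ.image β).image (· - α)) := by
    simp only [tsub_min, coe_image, coe_univ, Set.image_univ, ← Set.range_comp]
    rfl
  rw [hgen]
  exact hs.mem_monomialIdeal_image_tsub hmem
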